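/- Let d ≥ 2. There is a constant C = C(d) such that the following holds: if E ⊆ ℝ^d is a granular set contained in a dyadic cube q, and K ∈ ℤ satisfies 2^K ≥ l(q), then the set ∪_{k ∈ ℤ, l(q) ≤ 2^k ≤ 2^K} (E + S_{2^k}), where S_r denotes the sphere of radius r centered at the origin and + denotes Minkowski sum, has Lebesgue measure at most C · λ(E) · 2^{K(d−1)}. -/

import Mathlib

/-! Translating by a sphere of radius `r ≥ l(Q)` smears a dyadic cube `Q` of diameter
`√d l(Q)` over an annulus of width `2√d l(Q)` around the sphere, of measure
`≲ l(Q) r^(d-1)`. Covering `E` by cubes of side at most `l(q)` (larger cubes may be replaced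
by `q` itself) and summing over the cover, each scale `2^k` contributes `≲ λ(E) 2^(k(d-1))`,
and these contributions form a geometric series dominated by its top term `2^(K(d-1))`. -/

open MeasureTheory Set

/-- A dyadic cube in `ℝ^d`, given by a scale `k ∈ ℤ` and a corner `m ∈ ℤ^d`;
it represents the set `∏_i [2^k m_i, 2^k (m_i + 1))`. -/
structure DyadicCube (d : ℕ) where
  k : ℤ
  m : Fin d → ℤ

namespace DyadicCube

/-- The subset of `ℝ^d` determined by a dyadic cube. -/
def carrier {d : ℕ} (Q : DyadicCube d) : Set (EuclideanSpace ℝ (Fin d)) :=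
  {x | ∀ i, (2 : ℝ) ^ Q.k * Q.m i ≤ x i ∧ x i < (2 : ℝ) ^ Q.k * (Q.m i + 1)}

/-- The side-length `l(Q) = 2^k` of a dyadic cube. -/
noncomputable def len {d : ℕ} (Q : DyadicCube d) : ℝ := (2 : ℝ) ^ Q.k

end DyadicCube

/-- A set is granular if it is a finite union of dyadic cubes. -/
def Granular {d : ℕ} (E : Set (EuclideanSpace ℝ (Fin d))) : Prop :=
  ∃ 𝒬 : Finset (DyadicCube d), E = ⋃ Q ∈ 𝒬, Q.carrier

/-- The (dyadic one-dimensional Hausdorff content, or) length `λ(E)`: the infimum of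
`∑_{Q ∈ 𝒬} l(Q)` over all finite collections `𝒬` of dyadic cubes covering `E`. -/
noncomputable def dyadicLength {d : ℕ} (E : Set (EuclideanSpace ℝ (Fin d))) : ℝ :=
  sInf {s | ∃ 𝒬 : Finset (DyadicCube d),
    (E ⊆ ⋃ Q ∈ 𝒬, Q.carrier) ∧ s = ∑ Q ∈ 𝒬, Q.len}

/-- The thickness `Θ(E)`: the supremum of `|E ∩ Q| / l(Q)` over all dyadic cubes `Q`. -/
noncomputable def thickness {d : ℕ} (E : Set (EuclideanSpace ℝ (Fin d))) : ℝ :=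
  sSup {t | ∃ Q : DyadicCube d, t = (volume (E ∩ Q.carrier)).toReal / Q.len}

open Pointwise

open Metric Module

section AddHaar

variable {E : Type*}

lemma add_sphere_subset_closedBall_diff_ball [SeminormedAddCommGroup E] {s : Set E} {x : E}
    {D : ℝ} (hs : s ⊆ closedBall x D) (r : ℝ) :
    s + sphere 0 r ⊆ closedBall x (r + D) \ ball x (r - D) := by
  rintro _ ⟨p, hp, v, hv, rfl⟩
  have hpx : dist p x ≤ D := hs hp
  have hv' : dist (p + v) p = r := by simpa using hv
  constructor
  · rw [mem_closedBall]
    linarith [dist_triangle (p + v) p x]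
  · rw [mem_ball, not_lt]
    linarith [dist_triangle (p + v) x p, dist_comm x p]

variable [NormedAddCommGroup E] [NormedSpace ℝ E] [MeasurableSpace E] [BorelSpace E]
  [FiniteDimensional ℝ E] [Nontrivial E] (μ : Measure E) [μ.IsAddHaarMeasure]

lemma addHaar_closedBall_diff_ball_le (x : E) {a b : ℝ} (hb : 0 ≤ b) (hba : b ≤ a) :
    μ (closedBall x a \ ball x b) ≤
      ENNReal.ofReal (finrank ℝ E * a ^ (finrank ℝ E - 1) * (a - b)) * μ (ball 0 1) := by
  have ha : 0 ≤ a := hb.trans hba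
  rw [measure_sdiff (ball_subset_closedBall.trans (closedBall_subset_closedBall hba))
      measurableSet_ball.nullMeasurableSet measure_ball_lt_top.ne,
    μ.addHaar_closedBall x ha, μ.addHaar_ball x hb,
    ← ENNReal.sub_mul fun _ _ ↦ measure_ball_lt_top.ne, ← ENNReal.ofReal_sub _ (by positivity)]
  gcongr
  have h := abs_pow_sub_pow_le a b (finrank ℝ E)
  rw [abs_of_nonneg (sub_nonneg.2 (pow_le_pow_left₀ hb hba _)), abs_of_nonneg (sub_nonneg.2 hba),
    abs_of_nonneg ha, abs_of_nonneg hb, max_eq_left hba] at h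
  linarith

lemma addHaar_add_sphere_le {s : Set E} {x : E} {D r : ℝ} (hs : s ⊆ closedBall x D)
    (hD : 0 ≤ D) (hr : 0 ≤ r) :
    μ (s + sphere 0 r) ≤
      ENNReal.ofReal (finrank ℝ E * (r + D) ^ (finrank ℝ E - 1) * (2 * D)) * μ (ball 0 1) := by
  have hball : ball x (max (r - D) 0) ⊆ ball x (r - D) := by
    rcases max_cases (r - D) 0 with ⟨h, -⟩ | ⟨h, -⟩ <;> simp [h]
  have hwidth : r + D - max (r - D) 0 ≤ 2 * D := by linarith [le_max_left (r - D) 0]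
  calc μ (s + sphere 0 r) ≤ μ (closedBall x (r + D) \ ball x (max (r - D) 0)) :=
        measure_mono <| (add_sphere_subset_closedBall_diff_ball hs r).trans <|
          sdiff_subset_sdiff_right hball
    _ ≤ ENNReal.ofReal (finrank ℝ E * (r + D) ^ (finrank ℝ E - 1) * (r + D - max (r - D) 0)) *
          μ (ball 0 1) :=
        addHaar_closedBall_diff_ball_le μ x (le_max_right _ _) (max_le (by linarith) (by linarith))
    _ ≤ _ := by gcongr

end AddHaar

lemma EuclideanSpace.dist_le_sqrt_card_mul {ι : Type*} [Fintype ι] {x y : EuclideanSpace ℝ ι}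
    {r : ℝ} (hr : 0 ≤ r) (h : ∀ i, dist (x i) (y i) ≤ r) :
    dist x y ≤ √(Fintype.card ι) * r := by
  rw [EuclideanSpace.dist_eq, ← Real.sqrt_sq hr, ← Real.sqrt_mul (Nat.cast_nonneg _)]
  gcongr
  calc ∑ i, dist (x i) (y i) ^ 2 ≤ ∑ _i : ι, r ^ 2 :=
        Finset.sum_le_sum fun i _ ↦ pow_le_pow_left₀ dist_nonneg (h i) 2
    _ = Fintype.card ι * r ^ 2 := by simp

lemma sum_Icc_zpow_le_two_mul {ρ : ℝ} (hρ : 2 ≤ ρ) (a K : ℤ) :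
    ∑ k ∈ Finset.Icc a K, ρ ^ k ≤ 2 * ρ ^ K := by
  have hρ0 : 0 < ρ := by linarith
  rcases lt_or_ge K a with hK | hK
  · rw [Finset.Icc_eq_empty_of_lt hK, Finset.sum_empty]
    positivity
  induction K, hK using Int.leInduction with
  | base =>
    rw [Finset.Icc_self, Finset.sum_singleton]
    linarith [zpow_pos hρ0 a]
  | succ n han ih =>
    rw [← Finset.insert_Icc_right_eq_Icc_add_one (by omega),
      Finset.sum_insert (by simp), zpow_add_one₀ hρ0.ne']
    nlinarith [zpow_pos hρ0 n]

namespace DyadicCube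

variable {d : ℕ}

lemma len_pos (Q : DyadicCube d) : 0 < Q.len := zpow_pos two_pos _

noncomputable def corner (Q : DyadicCube d) : EuclideanSpace ℝ (Fin d) :=
  WithLp.toLp 2 fun i ↦ 2 ^ Q.k * Q.m i

lemma carrier_subset_closedBall (Q : DyadicCube d) :
    Q.carrier ⊆ closedBall Q.corner (√d * Q.len) := by
  intro x hx
  rw [mem_closedBall]
  refine (EuclideanSpace.dist_le_sqrt_card_mul Q.len_pos.le fun i ↦ ?_).trans_eq (by simp)
  obtain ⟨h₁, h₂⟩ := hx i
  rw [corner, PiLp.toLp_apply, Real.dist_eq, abs_of_nonneg (by linarith), len]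
  linarith

end DyadicCube

section Euclidean

variable {d : ℕ}

noncomputable def cubeAddSphereConst (d : ℕ) : ℝ :=
  2 * d * √d * (1 + √d) ^ (d - 1) * volume.real (ball (0 : EuclideanSpace ℝ (Fin d)) 1)

lemma cubeAddSphereConst_nonneg : 0 ≤ cubeAddSphereConst d := by
  unfold cubeAddSphereConst
  positivity

lemma cubeAddSphereConst_pos [NeZero d] : 0 < cubeAddSphereConst d := by
  have hd : (0 : ℝ) < d := Nat.cast_pos.2 (NeZero.pos d)
  have hball : 0 < volume.real (ball (0 : EuclideanSpace ℝ (Fin d)) 1) :=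
    ENNReal.toReal_pos (measure_ball_pos _ _ one_pos).ne' measure_ball_lt_top.ne
  unfold cubeAddSphereConst
  positivity

lemma DyadicCube.volume_carrier_add_sphere_le [NeZero d] (Q : DyadicCube d) {r : ℝ}
    (hQr : Q.len ≤ r) :
    volume (Q.carrier + sphere 0 r) ≤
      ENNReal.ofReal (cubeAddSphereConst d * Q.len * r ^ (d - 1)) := by
  have hQ := Q.len_pos
  have hr : 0 ≤ r := hQ.le.trans hQr
  have hdiam : √d * Q.len ≤ √d * r := by gcongr
  have h := addHaar_add_sphere_le volume Q.carrier_subset_closedBall (by positivity) hr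
  rw [finrank_euclideanSpace_fin] at h
  refine h.trans ?_
  rw [cubeAddSphereConst, ← ofReal_measureReal, ← ENNReal.ofReal_mul (by positivity)]
  gcongr ENNReal.ofReal ?_
  calc (d : ℝ) * (r + √d * Q.len) ^ (d - 1) * (2 * (√d * Q.len)) *
        volume.real (ball (0 : EuclideanSpace ℝ (Fin d)) 1)
      ≤ d * ((1 + √d) * r) ^ (d - 1) * (2 * (√d * Q.len)) *
        volume.real (ball (0 : EuclideanSpace ℝ (Fin d)) 1) := by
        gcongr
        linarith
    _ = _ := by rw [mul_pow]; ring

lemma volume_add_sphere_le_of_subset_biUnion [NeZero d] {E : Set (EuclideanSpace ℝ (Fin d))}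
    {𝒬 : Finset (DyadicCube d)} (hcov : E ⊆ ⋃ Q ∈ 𝒬, Q.carrier) {r : ℝ}
    (h𝒬 : ∀ Q ∈ 𝒬, Q.len ≤ r) :
    volume (E + sphere 0 r) ≤
      ENNReal.ofReal (cubeAddSphereConst d * (∑ Q ∈ 𝒬, Q.len) * r ^ (d - 1)) := by
  calc volume (E + sphere 0 r) ≤ volume (⋃ Q ∈ 𝒬, Q.carrier + sphere 0 r) := by
        refine measure_mono ((add_subset_add_right hcov).trans ?_)
        simp only [iUnion_add, subset_refl]
    _ ≤ ∑ Q ∈ 𝒬, volume (Q.carrier + sphere 0 r) := measure_biUnion_finset_le _ _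
    _ ≤ ∑ Q ∈ 𝒬, ENNReal.ofReal (cubeAddSphereConst d * Q.len * r ^ (d - 1)) :=
        Finset.sum_le_sum fun Q hQ ↦ Q.volume_carrier_add_sphere_le (h𝒬 Q hQ)
    _ = _ := by
        have := cubeAddSphereConst_nonneg (d := d)
        rw [← ENNReal.ofReal_sum_of_nonneg fun Q hQ ↦ ?_, ← Finset.sum_mul, ← Finset.mul_sum]
        have hr : 0 ≤ r := Q.len_pos.le.trans (h𝒬 Q hQ)
        have := Q.len_pos
        positivity

lemma exists_cover_len_le {q : DyadicCube d} {E : Set (EuclideanSpace ℝ (Fin d))}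
    (hEq : E ⊆ q.carrier) {𝒬 : Finset (DyadicCube d)} (hcov : E ⊆ ⋃ Q ∈ 𝒬, Q.carrier) :
    ∃ 𝒬' : Finset (DyadicCube d), E ⊆ ⋃ Q ∈ 𝒬', Q.carrier ∧ (∀ Q ∈ 𝒬', Q.len ≤ q.len) ∧
      ∑ Q ∈ 𝒬', Q.len ≤ ∑ Q ∈ 𝒬, Q.len := by
  classical
  let shrink (Q : DyadicCube d) : DyadicCube d := if Q.len ≤ q.len then Q else q
  have hshrink (Q : DyadicCube d) : (shrink Q).len ≤ Q.len ∧ (shrink Q).len ≤ q.len := by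
    by_cases h : Q.len ≤ q.len
    · simp only [shrink, if_pos h]
      exact ⟨le_rfl, h⟩
    · simp only [shrink, if_neg h]
      exact ⟨(not_le.1 h).le, le_rfl⟩
  refine ⟨𝒬.image shrink, fun x hx ↦ ?_, fun Q' hQ' ↦ ?_, ?_⟩
  · obtain ⟨Q, hQ, hxQ⟩ := mem_iUnion₂.1 (hcov hx)
    refine mem_iUnion₂.2 ⟨shrink Q, Finset.mem_image_of_mem _ hQ, ?_⟩
    by_cases h : Q.len ≤ q.len
    · simpa only [shrink, if_pos h] using hxQ
    · simpa only [shrink, if_neg h] using hEq hx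
  · obtain ⟨Q, -, rfl⟩ := Finset.mem_image.1 hQ'
    exact (hshrink Q).2
  · exact (Finset.sum_image_le_of_nonneg fun Q _ ↦ Q.len_pos.le).trans
      (Finset.sum_le_sum fun Q _ ↦ (hshrink Q).1)

lemma le_ofReal_mul_dyadicLength {E : Set (EuclideanSpace ℝ (Fin d))} (hE : Granular E)
    {m : ENNReal} {c : ℝ} (hc : 0 ≤ c)
    (h : ∀ 𝒬 : Finset (DyadicCube d), E ⊆ ⋃ Q ∈ 𝒬, Q.carrier →
      m ≤ ENNReal.ofReal (c * ∑ Q ∈ 𝒬, Q.len)) :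
    m ≤ ENNReal.ofReal (c * dyadicLength E) := by
  obtain ⟨𝒬₀, h𝒬₀⟩ := hE
  have hmono : Monotone fun s ↦ ENNReal.ofReal (c * s) := fun s t hst ↦
    ENNReal.ofReal_le_ofReal (mul_le_mul_of_nonneg_left hst hc)
  have hcont : Continuous fun s ↦ ENNReal.ofReal (c * s) :=
    ENNReal.continuous_ofReal.comp (continuous_const_mul c)
  set S : Set ℝ := {s | ∃ 𝒬 : Finset (DyadicCube d),
    E ⊆ ⋃ Q ∈ 𝒬, Q.carrier ∧ s = ∑ Q ∈ 𝒬, Q.len}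
  have hS_nonempty : S.Nonempty := ⟨_, 𝒬₀, h𝒬₀.subset, rfl⟩
  have hS_bdd : BddBelow S := by
    refine ⟨0, ?_⟩
    rintro _ ⟨𝒬, -, rfl⟩
    exact Finset.sum_nonneg fun Q _ ↦ Q.len_pos.le
  rw [show dyadicLength E = sInf S from rfl,
    hmono.map_csInf_of_continuousAt hcont.continuousAt hS_nonempty hS_bdd]
  refine le_sInf ?_
  rintro _ ⟨_, ⟨𝒬, hcov, rfl⟩, rfl⟩
  exact h 𝒬 hcov

lemma volume_biUnion_Icc_add_sphere_le (hd : 2 ≤ d) {E : Set (EuclideanSpace ℝ (Fin d))}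
    {𝒬 : Finset (DyadicCube d)} (hcov : E ⊆ ⋃ Q ∈ 𝒬, Q.carrier) {a : ℤ}
    (h𝒬 : ∀ Q ∈ 𝒬, Q.len ≤ 2 ^ a) (K : ℤ) :
    volume (⋃ k ∈ Finset.Icc a K, E + sphere 0 ((2 : ℝ) ^ k)) ≤
      ENNReal.ofReal (2 * cubeAddSphereConst d * (∑ Q ∈ 𝒬, Q.len) *
        (2 : ℝ) ^ (K * ((d : ℤ) - 1))) := by
  have : NeZero d := ⟨by omega⟩
  set c := cubeAddSphereConst d
  set ρ : ℝ := 2 ^ (d - 1)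
  have hpow (k : ℤ) : ((2 : ℝ) ^ k) ^ (d - 1) = ρ ^ k := by
    rw [← zpow_natCast, ← zpow_mul, mul_comm, zpow_mul, zpow_natCast]
  have hpowK : (2 : ℝ) ^ (K * ((d : ℤ) - 1)) = ρ ^ K := by
    rw [← hpow, ← zpow_natCast, ← zpow_mul, Nat.cast_sub (by omega), Nat.cast_one]
  have hgeom := sum_Icc_zpow_le_two_mul (le_self_pow₀ one_le_two (by omega) : (2 : ℝ) ≤ ρ) a K
  have hc := cubeAddSphereConst_nonneg (d := d)
  have hlen : 0 ≤ ∑ Q ∈ 𝒬, Q.len := Finset.sum_nonneg fun Q _ ↦ Q.len_pos.le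
  calc volume (⋃ k ∈ Finset.Icc a K, E + sphere 0 ((2 : ℝ) ^ k))
      ≤ ∑ k ∈ Finset.Icc a K, volume (E + sphere 0 ((2 : ℝ) ^ k)) :=
        measure_biUnion_finset_le _ _
    _ ≤ ∑ k ∈ Finset.Icc a K, ENNReal.ofReal (c * (∑ Q ∈ 𝒬, Q.len) * ρ ^ k) := by
        refine Finset.sum_le_sum fun k hk ↦ ?_
        rw [← hpow]
        exact volume_add_sphere_le_of_subset_biUnion hcov fun Q hQ ↦
          (h𝒬 Q hQ).trans (zpow_le_zpow_right₀ one_le_two (Finset.mem_Icc.1 hk).1)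
    _ = ENNReal.ofReal (c * (∑ Q ∈ 𝒬, Q.len) * ∑ k ∈ Finset.Icc a K, ρ ^ k) := by
        rw [← ENNReal.ofReal_sum_of_nonneg fun k _ ↦ by positivity, ← Finset.mul_sum]
    _ ≤ ENNReal.ofReal (c * (∑ Q ∈ 𝒬, Q.len) * (2 * ρ ^ K)) := by gcongr
    _ = _ := by rw [hpowK]; congr 1; ring

end Euclidean

/-- for `d ≥ 2` there is `C = C(d)` such that, whenever `E` is a granular set
contained in a dyadic cube `q` and `2^K ≥ l(q)`, the union over the scales
`l(q) ≤ 2^k ≤ 2^K` of the Minkowski sums `E + S_{2^k}` (spheres centered at the origin)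
has Lebesgue measure at most `C · λ(E) · 2^{K(d-1)}`. -/
theorem volume_union_granular_add_spheres (d : ℕ) (hd : 2 ≤ d) :
    ∃ C : ℝ, 0 < C ∧
      ∀ (q : DyadicCube d) (E : Set (EuclideanSpace ℝ (Fin d))),
        Granular E → E ⊆ q.carrier →
      ∀ K : ℤ, q.len ≤ (2 : ℝ) ^ K →
        volume (⋃ k : ℤ, ⋃ (_ : q.len ≤ (2 : ℝ) ^ k ∧ (2 : ℝ) ^ k ≤ (2 : ℝ) ^ K),
            (E + Metric.sphere (0 : EuclideanSpace ℝ (Fin d)) ((2 : ℝ) ^ k))) ≤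
          ENNReal.ofReal (C * dyadicLength E * (2 : ℝ) ^ (K * ((d : ℤ) - 1))) := by
  have : NeZero d := ⟨by omega⟩
  have hC : 0 < cubeAddSphereConst d := cubeAddSphereConst_pos
  refine ⟨2 * cubeAddSphereConst d, by positivity, ?_⟩
  intro q E hE hEq K _
  have hscales (k : ℤ) : q.len ≤ 2 ^ k ∧ (2 : ℝ) ^ k ≤ 2 ^ K ↔ k ∈ Finset.Icc q.k K := by
    simp only [DyadicCube.len, Finset.mem_Icc, zpow_le_zpow_iff_right₀ (one_lt_two (α := ℝ))]
  rw [iUnion_congr fun k ↦ iUnion_congr_Prop (hscales k) fun _ ↦ rfl, mul_right_comm]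
  refine le_ofReal_mul_dyadicLength hE (by positivity) fun 𝒬 hcov ↦ ?_
  obtain ⟨𝒬', hcov', hlen', hsum'⟩ := exists_cover_len_le hEq hcov
  refine (volume_biUnion_Icc_add_sphere_le hd hcov' hlen' K).trans (ENNReal.ofReal_le_ofReal ?_)
  rw [mul_right_comm]
  gcongr
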